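/- arXiv:2605.10308 — 5 statements merged into one kernel-verified Lean document; each statement's English description precedes it below -/
import Mathlib

section
/- Let g be a symmetric positive definite n×n real matrix (n ≥ 2). For every vector Y on ℝⁿ one has |(g⊗Y)_0|²_g = m·|Y|²_g, where m = (n+2)(n−1)/(n+1) and |Y|²_g = Σ g_{ij}Y^iY^j. -/
open Matrix BigOperators

noncomputable section

namespace ProjFunctional

/-- Contraction of a (1,2)-tensor: `con(Φ)_i = Σ_k Φ^k_{ik}`. -/
def conT {n : ℕ} (Φ : Fin n → Fin n → Fin n → ℝ) : Fin n → ℝ :=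
  fun i => ∑ k, Φ k i k

/-- `Sym(α)^i_{jk} = δ^i_j α_k + δ^i_k α_j`. -/
def symT {n : ℕ} (α : Fin n → ℝ) : Fin n → Fin n → Fin n → ℝ :=
  fun i j k => (if i = j then α k else 0) + (if i = k then α j else 0)

/-- Trace-free part `Φ₀ = Φ - (1/(n+1)) Sym(con Φ)`. -/
def tfT {n : ℕ} (Φ : Fin n → Fin n → Fin n → ℝ) : Fin n → Fin n → Fin n → ℝ :=
  fun i j k => Φ i j k - (1 / ((n : ℝ) + 1)) * symT (conT Φ) i j k

/-- `(g⊗X)^i_{jk} = X^i g_{jk}`. -/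
def gT {n : ℕ} (g : Matrix (Fin n) (Fin n) ℝ) (X : Fin n → ℝ) :
    Fin n → Fin n → Fin n → ℝ :=
  fun i j k => X i * g j k

/-- Metric trace `(tr_g Φ)^i = Σ_{j,k} g^{jk} Φ^i_{jk}` (using the inverse matrix `g⁻¹`). -/
def trg {n : ℕ} (g : Matrix (Fin n) (Fin n) ℝ) (Φ : Fin n → Fin n → Fin n → ℝ) :
    Fin n → ℝ :=
  fun i => ∑ j, ∑ k, g⁻¹ j k * Φ i j k

/-- Inner product `⟨Φ,Ψ⟩_g = Σ Φ^i_{jk} g^{jb} g^{kc} g_{ia} Ψ^a_{bc}` on (1,2)-tensors. -/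
def ipT {n : ℕ} (g : Matrix (Fin n) (Fin n) ℝ) (Φ Ψ : Fin n → Fin n → Fin n → ℝ) : ℝ :=
  ∑ i, ∑ j, ∑ k, ∑ a, ∑ b, ∑ c, Φ i j k * g⁻¹ j b * g⁻¹ k c * g i a * Ψ a b c

/-- `|Φ|²_g = ⟨Φ,Φ⟩_g`. -/
def norm2T {n : ℕ} (g : Matrix (Fin n) (Fin n) ℝ) (Φ : Fin n → Fin n → Fin n → ℝ) : ℝ :=
  ipT g Φ Φ

/-- `|X|²_g = Σ g_{ij} X^i X^j` for a vector `X`. -/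
def vnorm2 {n : ℕ} (g : Matrix (Fin n) (Fin n) ℝ) (X : Fin n → ℝ) : ℝ :=
  ∑ i, ∑ j, g i j * X i * X j

/-- `⟨X,Y⟩_g = Σ g_{ij} X^i Y^j` for vectors. -/
def vip {n : ℕ} (g : Matrix (Fin n) (Fin n) ℝ) (X Y : Fin n → ℝ) : ℝ :=
  ∑ i, ∑ j, g i j * X i * Y j

/-- `|α|²_g = Σ g^{ij} α_i α_j` for a covector `α`. -/
def cnorm2 {n : ℕ} (g : Matrix (Fin n) (Fin n) ℝ) (α : Fin n → ℝ) : ℝ :=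
  ∑ i, ∑ j, g⁻¹ i j * α i * α j

/-- Musical flat `(X♭)_i = Σ_j g_{ij} X^j`. -/
def flatT {n : ℕ} (g : Matrix (Fin n) (Fin n) ℝ) (X : Fin n → ℝ) : Fin n → ℝ :=
  fun i => ∑ j, g i j * X j

/-- The constant `m = (n+2)(n-1)/(n+1)`. -/
def mconst (n : ℕ) : ℝ := ((n : ℝ) + 2) * ((n : ℝ) - 1) / ((n : ℝ) + 1)

/-- `(Ψ ⊛_g Ψ)_{ij} = Σ Ψ^k_{uv} Ψ^a_{bc} g_{ia} g_{jk} g^{ub} g^{vc}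
      - 2 Σ Ψ^k_{jc} Ψ^a_{ib} g_{ak} g^{bc}`. -/
def circT {n : ℕ} (g : Matrix (Fin n) (Fin n) ℝ) (Ψ : Fin n → Fin n → Fin n → ℝ) :
    Fin n → Fin n → ℝ :=
  fun i j =>
    (∑ k, ∑ u, ∑ v, ∑ a, ∑ b, ∑ c,
      Ψ k u v * Ψ a b c * g i a * g j k * g⁻¹ u b * g⁻¹ v c)
    - 2 * ∑ k, ∑ c, ∑ a, ∑ b, Ψ k j c * Ψ a i b * g a k * g⁻¹ b c

/-- Stress-energy tensor `T_g(Ψ) = (1/2)|Ψ|²_g g + Ψ ⊛_g Ψ`. -/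
def stressEnergy {n : ℕ} (g : Matrix (Fin n) (Fin n) ℝ)
    (Ψ : Fin n → Fin n → Fin n → ℝ) : Fin n → Fin n → ℝ :=
  fun i j => (1 / 2) * norm2T g Ψ * g i j + circT g Ψ i j

/-- `⟨T,h⟩_g = Σ T_{ij} g^{ia} g^{jb} h_{ab}` for (0,2)-tensors. -/
def ip2 {n : ℕ} (g : Matrix (Fin n) (Fin n) ℝ) (T h : Fin n → Fin n → ℝ) : ℝ :=
  ∑ i, ∑ j, ∑ a, ∑ b, T i j * g⁻¹ i a * g⁻¹ j b * h a b

lemma sumc {ι : Type*} [Fintype ι] {M : Type*} [AddCommMonoid M] {f f' : ι → M}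
    (h : ∀ i, f i = f' i) : ∑ i, f i = ∑ i, f' i := Finset.sum_congr rfl fun i _ => h i

lemma ipT_expand {n : ℕ} (g : Matrix (Fin n) (Fin n) ℝ) (A B C : Fin n → Fin n → Fin n → ℝ) (t : ℝ) :
    ipT g (fun i j k => A i j k - t * (B i j k + C i j k)) (fun i j k => A i j k - t * (B i j k + C i j k))
    = ipT g A A - t * ipT g A B - t * ipT g A C - t * ipT g B A - t * ipT g C A
      + t^2 * ipT g B B + t^2 * ipT g B C + t^2 * ipT g C B + t^2 * ipT g C C := by
  simp only [ipT, Finset.mul_sum, ← Finset.sum_sub_distrib, ← Finset.sum_add_distrib]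
  refine sumc fun i => sumc fun j => sumc fun k => sumc fun a => sumc fun b => sumc fun c => ?_
  ring

section Aux
variable {n : ℕ} (g h : Matrix (Fin n) (Fin n) ℝ) (Y α : Fin n → ℝ)

/-- ip(A,A) = n N -/
lemma T_AA (hhs : ∀ p q, h p q = h q p) (hgs : ∀ p q, g p q = g q p)
    (hc1 : ∀ p q, ∑ r, g p r * h r q = if p = q then (1:ℝ) else 0)
    (hc2 : ∀ p q, ∑ r, h p r * g r q = if p = q then (1:ℝ) else 0)
    (hα : ∀ p, α p = ∑ k, Y k * g p k) :
    ∑ i, ∑ j, ∑ k, ∑ a, ∑ b, ∑ c,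
      (Y i * g j k) * h j b * h k c * g i a * (Y a * g b c)
    = n * ∑ i, Y i * α i := by
  calc ∑ i, ∑ j, ∑ k, ∑ a, ∑ b, ∑ c,
      (Y i * g j k) * h j b * h k c * g i a * (Y a * g b c)
      = ∑ i, ∑ j, ∑ k, ∑ a, ∑ b,
          ((Y i * g j k) * h j b * g i a * Y a) * (if k = b then 1 else 0) := by
        refine sumc fun i => sumc fun j => sumc fun k => sumc fun a => sumc fun b => ?_
        rw [← hc2 k b, Finset.mul_sum]
        exact sumc fun c => by rw [hgs c b]; ring
    _ = ∑ i, ∑ j, ∑ k, ∑ a, (Y i * g j k) * h j k * g i a * Y a := by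
        refine sumc fun i => sumc fun j => sumc fun k => sumc fun a => ?_
        simp [mul_ite, mul_one, mul_zero, Finset.sum_ite_eq]
    _ = ∑ i, ∑ j, ∑ k, (Y i * g j k) * h j k * α i := by
        refine sumc fun i => sumc fun j => sumc fun k => ?_
        rw [hα i, Finset.mul_sum]
        exact sumc fun a => by rw [hgs i a]; ring
    _ = ∑ i, ∑ j, (Y i * α i) * (if j = j then 1 else 0) := by
        refine sumc fun i => sumc fun j => ?_
        rw [← hc1 j j, Finset.mul_sum]
        exact sumc fun k => by rw [hhs j k]; ring
    _ = ∑ i, (n : ℝ) * (Y i * α i) := by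
        refine sumc fun i => ?_
        simp [Finset.sum_const, Finset.card_univ, nsmul_eq_mul]
    _ = n * ∑ i, Y i * α i := by rw [← Finset.mul_sum]

end Aux



section Aux
variable {n : ℕ} (g h : Matrix (Fin n) (Fin n) ℝ) (Y α : Fin n → ℝ)

/-- ip(A,B) = N -/
lemma T_AB (hgs : ∀ p q, g p q = g q p)
    (hc2 : ∀ p q, ∑ r, h p r * g r q = if p = q then (1:ℝ) else 0)
    (hα : ∀ p, α p = ∑ k, Y k * g p k)
    (hβ : ∀ p, ∑ c, h p c * α c = Y p) :
    ∑ i, ∑ j, ∑ k, ∑ a, ∑ b, ∑ c,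
      (Y i * g j k) * h j b * h k c * g i a * (if a = b then α c else 0)
    = ∑ i, Y i * α i := by
  calc ∑ i, ∑ j, ∑ k, ∑ a, ∑ b, ∑ c,
      (Y i * g j k) * h j b * h k c * g i a * (if a = b then α c else 0)
      = ∑ i, ∑ j, ∑ k, ∑ a, ∑ b,
          (if a = b then (Y i * g j k) * h j b * g i a * Y k else 0) := by
        refine sumc fun i => sumc fun j => sumc fun k => sumc fun a => sumc fun b => ?_
        split_ifs with h1
        · rw [← hβ k, Finset.mul_sum]; exact sumc fun c => by ring
        · simp
    _ = ∑ i, ∑ j, ∑ k, ∑ a, (Y i * g j k) * h j a * g i a * Y k := by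
        refine sumc fun i => sumc fun j => sumc fun k => ?_
        simp [Finset.sum_ite_eq]
    _ = ∑ i, ∑ j, ∑ k, ((Y i * g j k) * Y k) * (if j = i then 1 else 0) := by
        refine sumc fun i => sumc fun j => sumc fun k => ?_
        rw [← hc2 j i, Finset.mul_sum]
        exact sumc fun a => by rw [hgs a i]; ring
    _ = ∑ i, ∑ j, (Y i * α j) * (if j = i then 1 else 0) := by
        refine sumc fun i => sumc fun j => ?_
        rw [← Finset.sum_mul, hα j, Finset.mul_sum]
        exact congrArg (· * _) (sumc fun k => by ring)
    _ = ∑ i, Y i * α i := by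
        refine sumc fun i => ?_
        simp [mul_ite, mul_one, mul_zero, Finset.sum_ite_eq', Finset.mem_univ]

/-- ip(A,C) = N -/
lemma T_AC (hgs : ∀ p q, g p q = g q p)
    (hc2 : ∀ p q, ∑ r, h p r * g r q = if p = q then (1:ℝ) else 0)
    (hα : ∀ p, α p = ∑ k, Y k * g p k)
    (hβ : ∀ p, ∑ c, h p c * α c = Y p) :
    ∑ i, ∑ j, ∑ k, ∑ a, ∑ b, ∑ c,
      (Y i * g j k) * h j b * h k c * g i a * (if a = c then α b else 0)
    = ∑ i, Y i * α i := by
  calc ∑ i, ∑ j, ∑ k, ∑ a, ∑ b, ∑ c,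
      (Y i * g j k) * h j b * h k c * g i a * (if a = c then α b else 0)
      = ∑ i, ∑ j, ∑ k, ∑ a, ∑ b,
          (Y i * g j k) * h j b * h k a * g i a * α b := by
        refine sumc fun i => sumc fun j => sumc fun k => sumc fun a => sumc fun b => ?_
        simp [mul_ite, mul_zero, Finset.sum_ite_eq]
    _ = ∑ i, ∑ j, ∑ k, ∑ a, ((Y i * g j k) * h k a * g i a) * Y j := by
        refine sumc fun i => sumc fun j => sumc fun k => sumc fun a => ?_
        rw [← hβ j, Finset.mul_sum]
        exact sumc fun b => by ring
    _ = ∑ i, ∑ j, ∑ k, ((Y i * g j k) * Y j) * (if k = i then 1 else 0) := by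
        refine sumc fun i => sumc fun j => sumc fun k => ?_
        rw [← hc2 k i, Finset.mul_sum]
        exact sumc fun a => by rw [hgs a i]; ring
    _ = ∑ i, ∑ j, (Y i * g j i) * Y j := by
        refine sumc fun i => sumc fun j => ?_
        simp [mul_ite, mul_one, mul_zero, Finset.sum_ite_eq', Finset.mem_univ]
    _ = ∑ i, Y i * α i := by
        refine sumc fun i => ?_
        rw [hα i, Finset.mul_sum]
        exact sumc fun j => by rw [hgs j i]; ring

/-- ip(B,A) = N -/
lemma T_BA (hgs : ∀ p q, g p q = g q p)
    (hα : ∀ p, α p = ∑ k, Y k * g p k)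
    (hc2 : ∀ p q, ∑ r, h p r * g r q = if p = q then (1:ℝ) else 0)
    (hβ : ∀ p, ∑ c, h p c * α c = Y p) :
    ∑ i, ∑ j, ∑ k, ∑ a, ∑ b, ∑ c,
      (if i = j then α k else 0) * h j b * h k c * g i a * (Y a * g b c)
    = ∑ i, Y i * α i := by
  calc ∑ i, ∑ j, ∑ k, ∑ a, ∑ b, ∑ c,
      (if i = j then α k else 0) * h j b * h k c * g i a * (Y a * g b c)
      = ∑ i, ∑ j, ∑ k, ∑ a, ∑ b,
          (if i = j then (α k * h j b * g i a * Y a) * (if k = b then 1 else 0) else 0) := by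
        refine sumc fun i => sumc fun j => sumc fun k => sumc fun a => sumc fun b => ?_
        by_cases h1 : i = j
        · simp only [if_pos h1]
          rw [← hc2 k b, Finset.mul_sum]
          exact sumc fun c => by rw [hgs c b]; ring
        · simp [h1]
    _ = ∑ i, ∑ j, ∑ k, ∑ a, (if i = j then α k * h j k * g i a * Y a else 0) := by
        refine sumc fun i => sumc fun j => sumc fun k => sumc fun a => ?_
        split_ifs with h1
        · simp [mul_ite, mul_one, mul_zero, Finset.sum_ite_eq]
        · simp
    _ = ∑ i, ∑ j, ∑ k, (if i = j then α k * h j k * α i else 0) := by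
        refine sumc fun i => sumc fun j => sumc fun k => ?_
        split_ifs with h1
        · rw [hα i, Finset.mul_sum]
          exact sumc fun a => by ring
        · simp
    _ = ∑ i, ∑ j, (if i = j then Y j * α i else 0) := by
        refine sumc fun i => sumc fun j => ?_
        split_ifs with h1
        · rw [← hβ j, Finset.sum_mul]
          exact sumc fun k => by ring
        · simp
    _ = ∑ i, Y i * α i := by
        refine sumc fun i => ?_
        simp [Finset.sum_ite_eq]

/-- ip(C,A) = N -/
lemma T_CA (hhs : ∀ p q, h p q = h q p) (hgs : ∀ p q, g p q = g q p)
    (hα : ∀ p, α p = ∑ k, Y k * g p k)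
    (hc2 : ∀ p q, ∑ r, h p r * g r q = if p = q then (1:ℝ) else 0)
    (hβ : ∀ p, ∑ c, h p c * α c = Y p) :
    ∑ i, ∑ j, ∑ k, ∑ a, ∑ b, ∑ c,
      (if i = k then α j else 0) * h j b * h k c * g i a * (Y a * g b c)
    = ∑ i, Y i * α i := by
  calc ∑ i, ∑ j, ∑ k, ∑ a, ∑ b, ∑ c,
      (if i = k then α j else 0) * h j b * h k c * g i a * (Y a * g b c)
      = ∑ i, ∑ j, ∑ k, ∑ a, ∑ b,
          (if i = k then (α j * h j b * g i a * Y a) * (if k = b then 1 else 0) else 0) := by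
        refine sumc fun i => sumc fun j => sumc fun k => sumc fun a => sumc fun b => ?_
        by_cases h1 : i = k
        · simp only [if_pos h1]
          rw [← hc2 k b, Finset.mul_sum]
          exact sumc fun c => by rw [hgs c b]; ring
        · simp [h1]
    _ = ∑ i, ∑ j, ∑ k, ∑ a, (if i = k then α j * h j k * g i a * Y a else 0) := by
        refine sumc fun i => sumc fun j => sumc fun k => sumc fun a => ?_
        split_ifs with h1
        · simp [mul_ite, mul_one, mul_zero, Finset.sum_ite_eq]
        · simp
    _ = ∑ i, ∑ j, ∑ k, (if i = k then α j * h j k * α i else 0) := by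
        refine sumc fun i => sumc fun j => sumc fun k => ?_
        split_ifs with h1
        · rw [hα i, Finset.mul_sum]
          exact sumc fun a => by ring
        · simp
    _ = ∑ i, ∑ j, α j * h j i * α i := by
        refine sumc fun i => sumc fun j => ?_
        simp [Finset.sum_ite_eq]
    _ = ∑ i, Y i * α i := by
        refine sumc fun i => ?_
        have : ∑ j, α j * h j i * α i = (∑ j, h i j * α j) * α i := by
          rw [Finset.sum_mul]
          exact sumc fun j => by rw [hhs j i]; ring
        rw [this, hβ i]

end Aux



section Aux
variable {n : ℕ} (g h : Matrix (Fin n) (Fin n) ℝ) (Y α : Fin n → ℝ)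

/-- ip(B,B) = n N -/
lemma T_BB (hgs : ∀ p q, g p q = g q p)
    (hc2 : ∀ p q, ∑ r, h p r * g r q = if p = q then (1:ℝ) else 0)
    (hβ : ∀ p, ∑ c, h p c * α c = Y p) :
    ∑ i, ∑ j, ∑ k, ∑ a, ∑ b, ∑ c,
      (if i = j then α k else 0) * h j b * h k c * g i a * (if a = b then α c else 0)
    = n * ∑ i, Y i * α i := by
  calc ∑ i, ∑ j, ∑ k, ∑ a, ∑ b, ∑ c,
      (if i = j then α k else 0) * h j b * h k c * g i a * (if a = b then α c else 0)
      = ∑ i, ∑ j, ∑ k, ∑ a, ∑ b,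
          (if i = j then (if a = b then (α k * h j b * g i a) * Y k else 0) else 0) := by
        refine sumc fun i => sumc fun j => sumc fun k => sumc fun a => sumc fun b => ?_
        split_ifs with h1 h2
        · rw [← hβ k, Finset.mul_sum]; exact sumc fun c => by ring
        · simp
        · simp
        · simp
    _ = ∑ i, ∑ j, ∑ k, ∑ a, (if i = j then (α k * h j a * g i a) * Y k else 0) := by
        refine sumc fun i => sumc fun j => sumc fun k => sumc fun a => ?_
        split_ifs with h1
        · simp [Finset.sum_ite_eq]
        · simp
    _ = ∑ i, ∑ j, ∑ k, (if i = j then (α k * Y k) * (if j = i then 1 else 0) else 0) := by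
        refine sumc fun i => sumc fun j => sumc fun k => ?_
        by_cases h1 : i = j
        · simp only [if_pos h1]
          rw [← hc2 j i, Finset.mul_sum]
          exact sumc fun a => by rw [hgs a i]; ring
        · simp [h1]
    _ = ∑ i, ∑ j, (if i = j then (∑ k, Y k * α k) * (if j = i then 1 else 0) else 0) := by
        refine sumc fun i => sumc fun j => ?_
        by_cases h1 : i = j
        · simp only [if_pos h1]
          rw [Finset.sum_mul]
          exact sumc fun k => by ring
        · simp [h1]
    _ = ∑ i, ∑ k, Y k * α k := by
        refine sumc fun i => ?_
        simp [Finset.sum_ite_eq]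
    _ = n * ∑ i, Y i * α i := by
        simp [Finset.sum_const, Finset.card_univ, nsmul_eq_mul]

/-- ip(B,C) = N -/
lemma T_BC (hgs : ∀ p q, g p q = g q p)
    (hc2 : ∀ p q, ∑ r, h p r * g r q = if p = q then (1:ℝ) else 0)
    (hβ : ∀ p, ∑ c, h p c * α c = Y p) :
    ∑ i, ∑ j, ∑ k, ∑ a, ∑ b, ∑ c,
      (if i = j then α k else 0) * h j b * h k c * g i a * (if a = c then α b else 0)
    = ∑ i, Y i * α i := by
  calc ∑ i, ∑ j, ∑ k, ∑ a, ∑ b, ∑ c,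
      (if i = j then α k else 0) * h j b * h k c * g i a * (if a = c then α b else 0)
      = ∑ i, ∑ j, ∑ k, ∑ a, ∑ b,
          (if i = j then α k * h j b * h k a * g i a * α b else 0) := by
        refine sumc fun i => sumc fun j => sumc fun k => sumc fun a => sumc fun b => ?_
        by_cases h1 : i = j
        · simp only [if_pos h1]
          simp [mul_ite, mul_zero, Finset.sum_ite_eq]
        · simp [h1]
    _ = ∑ i, ∑ j, ∑ k, ∑ a, (if i = j then (α k * h k a * g i a) * Y j else 0) := by
        refine sumc fun i => sumc fun j => sumc fun k => sumc fun a => ?_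
        by_cases h1 : i = j
        · simp only [if_pos h1]
          rw [← hβ j, Finset.mul_sum]
          exact sumc fun b => by ring
        · simp [h1]
    _ = ∑ i, ∑ j, ∑ k, (if i = j then (α k * Y j) * (if k = i then 1 else 0) else 0) := by
        refine sumc fun i => sumc fun j => sumc fun k => ?_
        by_cases h1 : i = j
        · simp only [if_pos h1]
          rw [← hc2 k i, Finset.mul_sum]
          exact sumc fun a => by rw [hgs a i]; ring
        · simp [h1]
    _ = ∑ i, ∑ j, (if i = j then α i * Y j else 0) := by
        refine sumc fun i => sumc fun j => ?_
        by_cases h1 : i = j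
        · simp only [if_pos h1]
          simp [mul_ite, mul_one, mul_zero, Finset.sum_ite_eq', Finset.mem_univ]
        · simp [h1]
    _ = ∑ i, Y i * α i := by
        refine sumc fun i => ?_
        rw [Finset.sum_ite_eq Finset.univ i fun j => α i * Y j]
        simp [mul_comm]

/-- ip(C,B) = N -/
lemma T_CB (hgs : ∀ p q, g p q = g q p)
    (hc2 : ∀ p q, ∑ r, h p r * g r q = if p = q then (1:ℝ) else 0)
    (hβ : ∀ p, ∑ c, h p c * α c = Y p) :
    ∑ i, ∑ j, ∑ k, ∑ a, ∑ b, ∑ c,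
      (if i = k then α j else 0) * h j b * h k c * g i a * (if a = b then α c else 0)
    = ∑ i, Y i * α i := by
  calc ∑ i, ∑ j, ∑ k, ∑ a, ∑ b, ∑ c,
      (if i = k then α j else 0) * h j b * h k c * g i a * (if a = b then α c else 0)
      = ∑ i, ∑ j, ∑ k, ∑ a, ∑ b,
          (if i = k then (if a = b then (α j * h j b * g i a) * Y k else 0) else 0) := by
        refine sumc fun i => sumc fun j => sumc fun k => sumc fun a => sumc fun b => ?_
        split_ifs with h1 h2
        · rw [← hβ k, Finset.mul_sum]; exact sumc fun c => by ring
        · simp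
        · simp
        · simp
    _ = ∑ i, ∑ j, ∑ k, ∑ a, (if i = k then (α j * h j a * g i a) * Y k else 0) := by
        refine sumc fun i => sumc fun j => sumc fun k => sumc fun a => ?_
        split_ifs with h1
        · simp [Finset.sum_ite_eq]
        · simp
    _ = ∑ i, ∑ j, ∑ k, (if i = k then (α j * Y k) * (if j = i then 1 else 0) else 0) := by
        refine sumc fun i => sumc fun j => sumc fun k => ?_
        by_cases h1 : i = k
        · simp only [if_pos h1]
          rw [← hc2 j i, Finset.mul_sum]
          exact sumc fun a => by rw [hgs a i]; ring
        · simp [h1]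
    _ = ∑ i, ∑ j, (α j * Y i) * (if j = i then 1 else 0) := by
        refine sumc fun i => sumc fun j => ?_
        simp [Finset.sum_ite_eq]
    _ = ∑ i, Y i * α i := by
        refine sumc fun i => ?_
        rw [show (fun j => (α j * Y i) * (if j = i then (1:ℝ) else 0)) = fun j => (if j = i then α j * Y i else 0) from funext fun j => by split_ifs <;> ring] 
        simp [Finset.sum_ite_eq', mul_comm]

/-- ip(C,C) = n N -/
lemma T_CC (hgs : ∀ p q, g p q = g q p)
    (hc2 : ∀ p q, ∑ r, h p r * g r q = if p = q then (1:ℝ) else 0)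
    (hβ : ∀ p, ∑ c, h p c * α c = Y p) :
    ∑ i, ∑ j, ∑ k, ∑ a, ∑ b, ∑ c,
      (if i = k then α j else 0) * h j b * h k c * g i a * (if a = c then α b else 0)
    = n * ∑ i, Y i * α i := by
  calc ∑ i, ∑ j, ∑ k, ∑ a, ∑ b, ∑ c,
      (if i = k then α j else 0) * h j b * h k c * g i a * (if a = c then α b else 0)
      = ∑ i, ∑ j, ∑ k, ∑ a, ∑ b,
          (if i = k then α j * h j b * h k a * g i a * α b else 0) := by
        refine sumc fun i => sumc fun j => sumc fun k => sumc fun a => sumc fun b => ?_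
        by_cases h1 : i = k
        · simp only [if_pos h1]
          simp [mul_ite, mul_zero, Finset.sum_ite_eq]
        · simp [h1]
    _ = ∑ i, ∑ j, ∑ k, ∑ a, (if i = k then (α j * h k a * g i a) * Y j else 0) := by
        refine sumc fun i => sumc fun j => sumc fun k => sumc fun a => ?_
        by_cases h1 : i = k
        · simp only [if_pos h1]
          rw [← hβ j, Finset.mul_sum]
          exact sumc fun b => by ring
        · simp [h1]
    _ = ∑ i, ∑ j, ∑ k, (if i = k then (α j * Y j) * (if k = i then 1 else 0) else 0) := by
        refine sumc fun i => sumc fun j => sumc fun k => ?_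
        by_cases h1 : i = k
        · simp only [if_pos h1]
          rw [← hc2 k i, Finset.mul_sum]
          exact sumc fun a => by rw [hgs a i]; ring
        · simp [h1]
    _ = ∑ i, ∑ j, α j * Y j := by
        refine sumc fun i => sumc fun j => ?_
        simp [Finset.sum_ite_eq]
    _ = n * ∑ i, Y i * α i := by
        rw [show (∑ j : Fin n, α j * Y j) = ∑ j : Fin n, Y j * α j from sumc fun j => by ring]
        simp [Finset.sum_const, Finset.card_univ, nsmul_eq_mul]

end Aux


/-- |(g⊗Y)₀|²_g = m·|Y|²_g with m = (n+2)(n-1)/(n+1). -/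
theorem norm2T_tfT_gT {n : ℕ} (hn : 2 ≤ n) (g : Matrix (Fin n) (Fin n) ℝ)
    (hg : g.PosDef) (Y : Fin n → ℝ) :
    norm2T g (tfT (gT g Y)) = mconst n * vnorm2 g Y := by
  obtain ⟨α, hα⟩ : ∃ α : Fin n → ℝ, ∀ p, α p = ∑ q, Y q * g p q := ⟨_, fun p => rfl⟩
  have hgs : ∀ p q, g p q = g q p := by
    intro p q
    calc g p q = gᴴ p q := by rw [hg.1]
      _ = g q p := by simp [Matrix.conjTranspose_apply]
  have hhs : ∀ p q, g⁻¹ p q = g⁻¹ q p := by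
    intro p q
    calc g⁻¹ p q = (g⁻¹)ᴴ p q := by rw [hg.inv.1]
      _ = g⁻¹ q p := by simp [Matrix.conjTranspose_apply]
  have hu : IsUnit g.det := isUnit_iff_ne_zero.mpr hg.det_pos.ne'
  have hc1 : ∀ p q, ∑ r, g p r * g⁻¹ r q = if p = q then (1:ℝ) else 0 := by
    intro p q
    calc ∑ r, g p r * g⁻¹ r q = (g * g⁻¹) p q := (Matrix.mul_apply).symm
      _ = (1 : Matrix (Fin n) (Fin n) ℝ) p q := by rw [Matrix.mul_nonsing_inv g hu]
      _ = _ := Matrix.one_apply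
  have hc2 : ∀ p q, ∑ r, g⁻¹ p r * g r q = if p = q then (1:ℝ) else 0 := by
    intro p q
    calc ∑ r, g⁻¹ p r * g r q = (g⁻¹ * g) p q := (Matrix.mul_apply).symm
      _ = (1 : Matrix (Fin n) (Fin n) ℝ) p q := by rw [Matrix.nonsing_inv_mul g hu]
      _ = _ := Matrix.one_apply
  have hβ : ∀ p, ∑ c, g⁻¹ p c * α c = Y p := by
    intro p
    have e1 : ∑ c, g⁻¹ p c * α c = ∑ q, (∑ c, g⁻¹ p c * g c q) * Y q := by
      calc ∑ c, g⁻¹ p c * α c = ∑ c, ∑ q, g⁻¹ p c * (Y q * g c q) :=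
            sumc fun c => by rw [hα c, Finset.mul_sum]
        _ = ∑ q, ∑ c, g⁻¹ p c * (Y q * g c q) := Finset.sum_comm
        _ = ∑ q, (∑ c, g⁻¹ p c * g c q) * Y q :=
            sumc fun q => by rw [Finset.sum_mul]; exact sumc fun c => by ring
    rw [e1]
    calc ∑ q, (∑ c, g⁻¹ p c * g c q) * Y q = ∑ q, (if p = q then (1:ℝ) else 0) * Y q :=
          sumc fun q => by rw [hc2 p q]
      _ = Y p := by simp
  have hN : vnorm2 g Y = ∑ i, Y i * α i := by
    refine sumc fun i => ?_
    rw [hα i, Finset.mul_sum]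
    exact sumc fun j => by ring
  have h0 : tfT (gT g Y) = fun i j k =>
      (Y i * g j k) - (1 / ((n:ℝ) + 1)) *
        ((if i = j then α k else 0) + (if i = k then α j else 0)) := by
    funext i j k
    simp only [tfT, gT, symT, conT]
    rw [show (∑ q, Y q * g k q) = α k from (hα k).symm,
        show (∑ q, Y q * g j q) = α j from (hα j).symm]
  have hexp := ipT_expand g (fun i j k => Y i * g j k)
      (fun i j k => if i = j then α k else 0)
      (fun i j k => if i = k then α j else 0) (1 / ((n:ℝ) + 1))
  have eAA : ipT g (fun i j k => Y i * g j k) (fun i j k => Y i * g j k)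
      = n * ∑ i, Y i * α i := by
    simpa only [ipT] using T_AA g g⁻¹ Y α hhs hgs hc1 hc2 hα
  have eAB : ipT g (fun i j k => Y i * g j k) (fun i j k => if i = j then α k else 0)
      = ∑ i, Y i * α i := by
    simpa only [ipT] using T_AB g g⁻¹ Y α hgs hc2 hα hβ
  have eAC : ipT g (fun i j k => Y i * g j k) (fun i j k => if i = k then α j else 0)
      = ∑ i, Y i * α i := by
    simpa only [ipT] using T_AC g g⁻¹ Y α hgs hc2 hα hβ
  have eBA : ipT g (fun i j k => if i = j then α k else 0) (fun i j k => Y i * g j k)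
      = ∑ i, Y i * α i := by
    simpa only [ipT] using T_BA g g⁻¹ Y α hgs hα hc2 hβ
  have eCA : ipT g (fun i j k => if i = k then α j else 0) (fun i j k => Y i * g j k)
      = ∑ i, Y i * α i := by
    simpa only [ipT] using T_CA g g⁻¹ Y α hhs hgs hα hc2 hβ
  have eBB : ipT g (fun i j k => if i = j then α k else 0) (fun i j k => if i = j then α k else 0)
      = n * ∑ i, Y i * α i := by
    simpa only [ipT] using T_BB g g⁻¹ Y α hgs hc2 hβ
  have eBC : ipT g (fun i j k => if i = j then α k else 0) (fun i j k => if i = k then α j else 0)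
      = ∑ i, Y i * α i := by
    simpa only [ipT] using T_BC g g⁻¹ Y α hgs hc2 hβ
  have eCB : ipT g (fun i j k => if i = k then α j else 0) (fun i j k => if i = j then α k else 0)
      = ∑ i, Y i * α i := by
    simpa only [ipT] using T_CB g g⁻¹ Y α hgs hc2 hβ
  have eCC : ipT g (fun i j k => if i = k then α j else 0) (fun i j k => if i = k then α j else 0)
      = n * ∑ i, Y i * α i := by
    simpa only [ipT] using T_CC g g⁻¹ Y α hgs hc2 hβ
  rw [norm2T, h0, hexp, eAA, eAB, eAC, eBA, eCA, eBB, eBC, eCB, eCC, hN, mconst]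
  have hn1 : ((n:ℝ) + 1) ≠ 0 := by positivity
  field_simp
  ring


end ProjFunctional
end
end

section
/- Let g be a symmetric positive definite n×n real matrix (n ≥ 2) and Φ a (1,2)-tensor symmetric in its lower indices with con(Φ) = 0. Set X = (1/m) tr_g(Φ) and A = Φ − (g⊗X)_0, where m = (n+2)(n−1)/(n+1). Then tr_g(A) = 0. -/
open Matrix BigOperators

noncomputable section

namespace ProjFunctional

/-- with X = (1/m) tr_g Φ and A = Φ - (g⊗X)₀ one has tr_g(A) = 0. -/
theorem trg_A_eq_zero {n : ℕ} (hn : 2 ≤ n) (g : Matrix (Fin n) (Fin n) ℝ)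
    (hg : g.PosDef) (Φ : Fin n → Fin n → Fin n → ℝ)
    (hΦ : ∀ i j k, Φ i j k = Φ i k j) (hcon : conT Φ = fun _ => (0 : ℝ))
    (X : Fin n → ℝ) (hX : X = fun i => (1 / mconst n) * trg g Φ i)
    (A : Fin n → Fin n → Fin n → ℝ)
    (hA : A = fun i j k => Φ i j k - tfT (gT g X) i j k) :
    trg g A = fun _ => (0 : ℝ) := by
  have hdet : IsUnit g.det := (isUnit_iff_ne_zero).2 (ne_of_gt hg.det_pos)
  have hinvg : g⁻¹ * g = 1 := Matrix.nonsing_inv_mul g hdet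
  have hginv : g * g⁻¹ = 1 := Matrix.mul_nonsing_inv g hdet
  have hsym : ∀ i j, g i j = g j i := by
    intro i j
    have := hg.1
    rw [Matrix.IsHermitian] at this
    conv_lhs => rw [← this]
    simp [Matrix.conjTranspose_apply]
  have hsyminv : ∀ i j, g⁻¹ i j = g⁻¹ j i := by
    intro i j
    have h := hg.1.inv
    rw [Matrix.IsHermitian] at h
    conv_lhs => rw [← h]
    simp [Matrix.conjTranspose_apply]
  have hig : ∀ i j, ∑ k, g⁻¹ i k * g k j = if i = j then 1 else 0 := by
    intro i j
    have := congrFun (congrFun hinvg i) j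
    simpa [Matrix.mul_apply, Matrix.one_apply] using this
  have hgi : ∀ i j, ∑ k, g i k * g⁻¹ k j = if i = j then 1 else 0 := by
    intro i j
    have := congrFun (congrFun hginv i) j
    simpa [Matrix.mul_apply, Matrix.one_apply] using this
  -- compute trace of g⊗X
  have h1 : ∀ i, trg g (gT g X) i = (n : ℝ) * X i := by
    intro i
    have : trg g (gT g X) i = X i * ∑ j, ∑ k, g⁻¹ j k * g k j := by
      simp only [trg, gT, Finset.mul_sum]
      apply Finset.sum_congr rfl; intro j _
      apply Finset.sum_congr rfl; intro k _
      rw [hsym j k]; ring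
    rw [this]
    have : ∑ j, ∑ k, g⁻¹ j k * g k j = (n : ℝ) := by
      have h := fun j => hig j j
      calc ∑ j, ∑ k, g⁻¹ j k * g k j = ∑ j : Fin n, (1 : ℝ) := by
            apply Finset.sum_congr rfl; intro j _; rw [h j]; simp
        _ = (n : ℝ) := by simp
    rw [this]; ring
  -- contraction of g⊗X is the flat of X
  have hcg : ∀ i, conT (gT g X) i = ∑ l, g i l * X l := by
    intro i
    simp only [conT, gT]
    apply Finset.sum_congr rfl; intro k _
    rw [hsym i k]; ring
  -- key: Σ_k g⁻¹ i k * (Σ_l g k l * X l) = X i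
  have hrec : ∀ i, (∑ k, g⁻¹ i k * ∑ l, g k l * X l) = X i := by
    intro i
    calc ∑ k, g⁻¹ i k * ∑ l, g k l * X l
        = ∑ k, ∑ l, g⁻¹ i k * g k l * X l := by
          apply Finset.sum_congr rfl; intro k _
          rw [Finset.mul_sum]
          apply Finset.sum_congr rfl; intro l _; ring
      _ = ∑ l, ∑ k, g⁻¹ i k * g k l * X l := Finset.sum_comm
      _ = ∑ l, (∑ k, g⁻¹ i k * g k l) * X l := by
          apply Finset.sum_congr rfl; intro l _
          rw [Finset.sum_mul]
      _ = X i := by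
          simp only [hig]
          simp
  have h2 : ∀ i, trg g (symT (conT (gT g X))) i = 2 * X i := by
    intro i
    simp only [trg, symT, hcg]
    have : ∀ j k : Fin n, g⁻¹ j k *
        ((if i = j then ∑ l, g k l * X l else 0) + (if i = k then ∑ l, g j l * X l else 0))
        = (if i = j then g⁻¹ j k * ∑ l, g k l * X l else 0)
          + (if i = k then g⁻¹ j k * ∑ l, g j l * X l else 0) := by
      intro j k
      simp only [mul_add, mul_ite, mul_zero]
    simp only [this, Finset.sum_add_distrib]
    have e1 : (∑ j, ∑ k, if i = j then g⁻¹ j k * ∑ l, g k l * X l else 0) = X i := by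
      rw [Finset.sum_eq_single i]
      · simp only [if_pos rfl]; exact hrec i
      · intro b _ hb; simp [Ne.symm hb]
      · intro h; exact absurd (Finset.mem_univ i) h
    have e2 : (∑ j, ∑ k, if i = k then g⁻¹ j k * ∑ l, g j l * X l else 0) = X i := by
      rw [Finset.sum_comm]
      rw [Finset.sum_eq_single i]
      · simp only [if_pos rfl]
        calc ∑ j, g⁻¹ j i * ∑ l, g j l * X l
            = ∑ j, g⁻¹ i j * ∑ l, g j l * X l := by
              apply Finset.sum_congr rfl; intro j _; rw [hsyminv j i]
          _ = X i := hrec i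
      · intro b _ hb; simp [Ne.symm hb]
      · intro h; exact absurd (Finset.mem_univ i) h
    rw [e1, e2]; ring
  -- mconst nonzero
  have hn1 : (1 : ℝ) ≤ (n : ℝ) := by exact_mod_cast Nat.one_le_of_lt hn
  have hm : mconst n ≠ 0 := by
    have h2n : (2 : ℝ) ≤ (n : ℝ) := by exact_mod_cast hn
    have : (0 : ℝ) < ((n : ℝ) + 2) * ((n : ℝ) - 1) / ((n : ℝ) + 1) := by
      apply div_pos
      · apply mul_pos <;> linarith
      · linarith
    unfold mconst; linarith
  have hmX : ∀ i, mconst n * X i = trg g Φ i := by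
    intro i
    rw [hX]
    field_simp
  funext i
  have hlin : trg g A i = trg g Φ i
      - (trg g (gT g X) i - (1 / ((n : ℝ) + 1)) * trg g (symT (conT (gT g X))) i) := by
    simp only [hA, trg, tfT, mul_sub, Finset.sum_sub_distrib, Finset.mul_sum]
    ring_nf
    congr 1
    apply Finset.sum_congr rfl; intro j _
    apply Finset.sum_congr rfl; intro k _
    ring
  rw [hlin, h1, h2]
  have hmval : (n : ℝ) * X i - 1 / ((n : ℝ) + 1) * (2 * X i) = mconst n * X i := by
    have hpos : (n : ℝ) + 1 ≠ 0 := by linarith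
    unfold mconst
    field_simp
    ring
  rw [hmval, hmX]
  ring

end ProjFunctional
end
end

section
/- Let g be a symmetric positive definite n×n real matrix (n ≥ 2), h a symmetric n×n real matrix, and Ψ a (1,2)-tensor symmetric in its lower indices with con(Ψ) = 0. Then the real function t ↦ |Ψ|²_{g+th} · √det(g+th), defined for t near 0 (where g+th is positive definite), is differentiable at t = 0 with derivative equal to ⟨T_g(Ψ), h⟩_g · √det(g), where ⟨T,h⟩_g = Σ T_{ij} g^{ia} g^{jb} h_{ab}, T_g(Ψ) = (1/2)|Ψ|²_g g + Ψ⊛_g Ψ, and (Ψ⊛_g Ψ)_{ij} = Σ Ψ^k_{uv} Ψ^a_{bc} g_{ia} g_{jk} g^{ub} g^{vc} − 2 Σ Ψ^k_{jc} Ψ^a_{ib} g_{ak} g^{bc}. -/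
open Matrix BigOperators

noncomputable section

namespace ProjFunctional

/-!
Write `|Ψ|²_g = Q(g, g⁻¹, g⁻¹)` for the trilinear form
`Q(A, B, C) = Σ Ψ^i_{jk} B^{jb} C^{kc} A_{ia} Ψ^a_{bc}`. Along `g + t h` the inverse has derivative
`-g⁻¹ h g⁻¹` and the determinant has derivative `det g · tr (g⁻¹ h)`, so by the product rule
`|Ψ|²` has derivative `Q(h, g⁻¹, g⁻¹) - 2 Q(g, g⁻¹ h g⁻¹, g⁻¹)`; the two inverse-metric slots of
`Q` are interchangeable because `Ψ` is symmetric in its lower indices. Expressing `Q` and `Ψ ⊛ Ψ`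
through traces of products of the slice matrices `(Ψ^i_{jk})_{jk}`, transposition and cyclicity
of the trace show that `⟨Ψ ⊛ Ψ, h⟩_g` is the same expression, while `½ |Ψ|² g` pairs with `h` to
`½ |Ψ|² tr (g⁻¹ h)`, which is what the derivative of `√det` contributes.
-/

open Filter Topology

section Calculus

theorem hasDerivAt_add_smul_apply {ι κ : Type*} (g h : Matrix ι κ ℝ) (i : ι) (j : κ) (x : ℝ) :
    HasDerivAt (fun t : ℝ => (g + t • h) i j) (h i j) x := by
  simpa using ((hasDerivAt_id x).mul_const (h i j)).const_add (g i j)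

variable {ι : Type*} [Fintype ι] [DecidableEq ι]

theorem inv_add_smul_eq_sub (g h : Matrix ι ι ℝ) (hg : IsUnit g.det) {t : ℝ}
    (ht : IsUnit (g + t • h).det) :
    (g + t • h)⁻¹ = g⁻¹ - t • (g⁻¹ * h * (g + t • h)⁻¹) := by
  refine eq_sub_of_add_eq ?_
  calc (g + t • h)⁻¹ + t • (g⁻¹ * h * (g + t • h)⁻¹)
      = g⁻¹ * (g + t • h) * (g + t • h)⁻¹ := by
        rw [Matrix.mul_add, Matrix.mul_smul, nonsing_inv_mul _ hg, Matrix.add_mul,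
          Matrix.one_mul, Matrix.smul_mul]
    _ = g⁻¹ := by rw [Matrix.mul_assoc, mul_nonsing_inv _ ht, Matrix.mul_one]

theorem hasDerivAt_inv_add_smul_apply (g h : Matrix ι ι ℝ) (hg : IsUnit g.det) (i j : ι) :
    HasDerivAt (fun t : ℝ => (g + t • h)⁻¹ i j) (-(g⁻¹ * h * g⁻¹) i j) 0 := by
  have hdet : ContinuousAt (fun t : ℝ => (g + t • h).det) 0 := by fun_prop
  have hunit : ∀ᶠ t : ℝ in 𝓝 0, IsUnit (g + t • h).det :=
    (hdet.eventually_ne (by simpa using hg.ne_zero)).mono fun t ht => ht.isUnit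
  have hinv : ContinuousAt (fun t : ℝ => (g + t • h)⁻¹) 0 := by
    refine ContinuousAt.comp (g := Inv.inv) (continuousAt_matrix_inv _ ?_) (by fun_prop)
    rw [Ring.inverse_eq_inv']
    exact continuousAt_inv₀ (by simpa using hg.ne_zero)
  have hslope : ∀ᶠ t in 𝓝[≠] (0 : ℝ),
      -(g⁻¹ * h * (g + t • h)⁻¹) i j = slope (fun t : ℝ => (g + t • h)⁻¹ i j) 0 t := by
    filter_upwards [self_mem_nhdsWithin, nhdsWithin_le_nhds hunit] with t ht hu
    have ht0 : t ≠ 0 := ht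
    rw [slope_def_field, congrFun₂ (inv_add_smul_eq_sub g h hg hu) i j]
    simp [neg_div, mul_div_cancel_left₀ _ ht0]
  have hlim : ContinuousAt (fun t : ℝ => -(g⁻¹ * h * (g + t • h)⁻¹) i j) 0 :=
    (by fun_prop : Continuous fun M : Matrix ι ι ℝ => -(g⁻¹ * h * M) i j).continuousAt.comp hinv
  rw [hasDerivAt_iff_tendsto_slope]
  refine Tendsto.congr' hslope ?_
  simpa using hlim.tendsto.mono_left nhdsWithin_le_nhds

theorem hasDerivAt_det_add_smul (g h : Matrix ι ι ℝ) (hg : IsUnit g.det) :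
    HasDerivAt (fun t : ℝ => (g + t • h).det) (g.det * trace (g⁻¹ * h)) 0 := by
  set p := (det (1 + (Polynomial.X : Polynomial ℝ) • (g⁻¹ * h).map Polynomial.C)).divX.divX
  have hexp : (fun t : ℝ => (g + t • h).det)
      = fun t => g.det * (1 + trace (g⁻¹ * h) * t + p.eval t * t ^ 2) := funext fun t => by
    rw [← det_one_add_smul, ← det_mul, Matrix.mul_add, Matrix.mul_one, Matrix.mul_smul,
      ← Matrix.mul_assoc, mul_nonsing_inv _ hg, Matrix.one_mul]
  have hlin : HasDerivAt (fun t : ℝ => 1 + trace (g⁻¹ * h) * t) (trace (g⁻¹ * h)) 0 := by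
    simpa using ((hasDerivAt_id (0 : ℝ)).const_mul (trace (g⁻¹ * h))).const_add 1
  have hquad : HasDerivAt (fun t : ℝ => p.eval t * t ^ 2) 0 0 := by
    simpa using (p.hasDerivAt 0).fun_mul (hasDerivAt_pow 2 (0 : ℝ))
  rw [hexp]
  simpa using (hlin.add hquad).const_mul g.det

end Calculus

section TrilinearForm

variable {ι : Type*} [Fintype ι] (Ψ : ι → ι → ι → ℝ)

/-- `|Ψ|²` with its metric slot `A` and its two inverse-metric slots `B`, `C` made independent. -/
def normForm (A B C : Matrix ι ι ℝ) : ℝ :=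
  ∑ i, ∑ j, ∑ k, ∑ a, ∑ b, ∑ c, Ψ i j k * B j b * C k c * A i a * Ψ a b c

/-- Entry `(i, a)` is `Σ Ψ^i_{jk} B^{jb} C^{kc} Ψ^a_{bc}`, a pairing of the slices `Ψ^i`, `Ψ^a`. -/
def sliceGram (B C : Matrix ι ι ℝ) : Matrix ι ι ℝ :=
  of fun i a => trace (B * of (Ψ a) * Cᵀ * (of (Ψ i))ᵀ)

theorem normForm_eq_trace (A B C : Matrix ι ι ℝ) :
    normForm Ψ A B C = trace (A * (sliceGram Ψ B C)ᵀ) := by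
  simp only [normForm, sliceGram, trace, diag, mul_apply, transpose_apply, of_apply,
    Finset.mul_sum, Finset.sum_mul]
  refine Finset.sum_congr rfl fun i _ => ?_
  conv_rhs => rw [Finset.sum_comm]
  refine Finset.sum_congr rfl fun j _ => ?_
  conv_rhs => rw [Finset.sum_comm]
  refine Finset.sum_congr rfl fun k _ => Finset.sum_congr rfl fun a _ => ?_
  conv_rhs => rw [Finset.sum_comm]
  refine Finset.sum_congr rfl fun b _ => Finset.sum_congr rfl fun c _ => ?_
  ring

theorem normForm_neg_mid (A B C : Matrix ι ι ℝ) :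
    normForm Ψ A (-B) C = -normForm Ψ A B C := by
  simp [normForm]

theorem hasDerivAt_normForm {A B C : ℝ → Matrix ι ι ℝ} {A' B' C' : Matrix ι ι ℝ} {x : ℝ}
    (hA : ∀ i j, HasDerivAt (fun t => A t i j) (A' i j) x)
    (hB : ∀ i j, HasDerivAt (fun t => B t i j) (B' i j) x)
    (hC : ∀ i j, HasDerivAt (fun t => C t i j) (C' i j) x) :
    HasDerivAt (fun t => normForm Ψ (A t) (B t) (C t))
      (normForm Ψ A' (B x) (C x) + normForm Ψ (A x) B' (C x) + normForm Ψ (A x) (B x) C') x := by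
  simp only [normForm, ← Finset.sum_add_distrib]
  exact .fun_sum fun i _ => .fun_sum fun j _ => .fun_sum fun k _ =>
    .fun_sum fun a _ => .fun_sum fun b _ => .fun_sum fun c _ =>
      ((((hB j b).const_mul (Ψ i j k)).fun_mul (hC k c)).fun_mul (hA i a)).mul_const
        (Ψ a b c) |>.congr_deriv (by ring)

variable {Ψ}

theorem sliceGram_comm (hΨ : ∀ i j k, Ψ i j k = Ψ i k j) (B C : Matrix ι ι ℝ) :
    sliceGram Ψ B C = sliceGram Ψ C B := by
  have hslice : ∀ i, (of (Ψ i))ᵀ = of (Ψ i) := fun i => by ext j k; exact (hΨ i j k).symm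
  ext i a
  simp only [sliceGram, of_apply, hslice]
  rw [← trace_transpose]
  simp only [transpose_mul, transpose_transpose, hslice, Matrix.mul_assoc]
  rw [trace_mul_comm]
  simp only [Matrix.mul_assoc]

theorem normForm_comm (hΨ : ∀ i j k, Ψ i j k = Ψ i k j) (A B C : Matrix ι ι ℝ) :
    normForm Ψ A B C = normForm Ψ A C B := by
  rw [normForm_eq_trace, normForm_eq_trace, sliceGram_comm hΨ]

end TrilinearForm

section Metric

variable {n : ℕ}

theorem norm2T_eq_normForm (g : Matrix (Fin n) (Fin n) ℝ) (Ψ : Fin n → Fin n → Fin n → ℝ) :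
    norm2T g Ψ = normForm Ψ g g⁻¹ g⁻¹ :=
  rfl

theorem ip2_eq_trace (g : Matrix (Fin n) (Fin n) ℝ) (T h : Fin n → Fin n → ℝ) :
    ip2 g T h = trace (g⁻¹ * of h * g⁻¹ᵀ * (of T)ᵀ) := by
  simp only [ip2, trace, diag, mul_apply, transpose_apply, of_apply, Finset.sum_mul]
  refine Finset.sum_congr rfl fun i _ => Finset.sum_congr rfl fun j _ => ?_
  conv_rhs => rw [Finset.sum_comm]
  refine Finset.sum_congr rfl fun a _ => Finset.sum_congr rfl fun b _ => ?_
  ring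

theorem circT_eq (g : Matrix (Fin n) (Fin n) ℝ) (Ψ : Fin n → Fin n → Fin n → ℝ) :
    of (circT g Ψ) = g * (sliceGram Ψ g⁻¹ g⁻¹)ᵀ * gᵀ
      - (2 : ℝ) • ∑ k, ∑ a, g a k • (of (Ψ a) * g⁻¹ * (of (Ψ k))ᵀ) := by
  ext i j
  have hfirst : (∑ k, ∑ u, ∑ v, ∑ a, ∑ b, ∑ c,
      Ψ k u v * Ψ a b c * g i a * g j k * g⁻¹ u b * g⁻¹ v c)
      = normForm Ψ (of fun k a => g i a * g j k) g⁻¹ g⁻¹ := by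
    unfold normForm
    refine Finset.sum_congr rfl fun k _ => Finset.sum_congr rfl fun u _ =>
      Finset.sum_congr rfl fun v _ => Finset.sum_congr rfl fun a _ =>
      Finset.sum_congr rfl fun b _ => Finset.sum_congr rfl fun c _ => ?_
    simp only [of_apply]
    ring
  have hsecond : (∑ k, ∑ c, ∑ a, ∑ b, Ψ k j c * Ψ a i b * g a k * g⁻¹ b c)
      = (∑ k, ∑ a, g a k • (of (Ψ a) * g⁻¹ * (of (Ψ k))ᵀ)) i j := by
    simp only [Matrix.sum_apply, Matrix.smul_apply, mul_apply, transpose_apply, of_apply,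
      smul_eq_mul, Finset.mul_sum, Finset.sum_mul]
    refine Finset.sum_congr rfl fun k _ => ?_
    rw [Finset.sum_comm]
    refine Finset.sum_congr rfl fun a _ => Finset.sum_congr rfl fun c _ =>
      Finset.sum_congr rfl fun b _ => ?_
    ring
  rw [of_apply, circT, hfirst, hsecond, normForm_eq_trace, Matrix.sub_apply, Matrix.smul_apply,
    smul_eq_mul]
  simp only [trace, diag, mul_apply, transpose_apply, of_apply, Finset.sum_mul]
  refine congrArg (· - _) (Finset.sum_congr rfl fun k _ => Finset.sum_congr rfl fun a _ => ?_)
  ring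

theorem ip2_circT (g : Matrix (Fin n) (Fin n) ℝ) (Ψ : Fin n → Fin n → Fin n → ℝ)
    (h : Fin n → Fin n → ℝ) :
    ip2 g (circT g Ψ) h = trace (sliceGram Ψ g⁻¹ g⁻¹ * gᵀ * (g⁻¹ * of h * g⁻¹ᵀ) * g)
      - 2 * normForm Ψ g (g⁻¹ * of h * g⁻¹ᵀ) g⁻¹ := by
  set H := g⁻¹ * of h * g⁻¹ᵀ
  have hfirst : trace (H * (g * (sliceGram Ψ g⁻¹ g⁻¹)ᵀ * gᵀ)ᵀ)
      = trace (sliceGram Ψ g⁻¹ g⁻¹ * gᵀ * H * g) := by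
    simp only [transpose_mul, transpose_transpose, Matrix.mul_assoc]
    rw [← Matrix.mul_assoc H, trace_mul_comm]
    simp only [Matrix.mul_assoc]
  have hsecond : trace (H * (∑ k, ∑ a, g a k • (of (Ψ a) * g⁻¹ * (of (Ψ k))ᵀ))ᵀ)
      = normForm Ψ g H g⁻¹ := by
    simp only [transpose_sum, transpose_smul, Matrix.mul_sum, Matrix.mul_smul, trace_sum,
      trace_smul, smul_eq_mul, transpose_mul, transpose_transpose]
    rw [normForm_eq_trace, ← sum_hadamard_eq]
    simp only [hadamard_apply, sliceGram, of_apply, Matrix.mul_assoc]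
    exact Finset.sum_comm
  rw [ip2_eq_trace, circT_eq, transpose_sub, transpose_smul, Matrix.mul_sub, Matrix.mul_smul,
    trace_sub, trace_smul, smul_eq_mul, hfirst, hsecond]

theorem ip2_stressEnergy (Ψ : Fin n → Fin n → Fin n → ℝ) {g h : Matrix (Fin n) (Fin n) ℝ}
    (hgs : g.IsSymm) (hg : IsUnit g.det) (hh : h.IsSymm) :
    ip2 g (stressEnergy g Ψ) (fun i j => h i j)
      = normForm Ψ h g⁻¹ g⁻¹ - 2 * normForm Ψ g (g⁻¹ * h * g⁻¹) g⁻¹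
        + norm2T g Ψ * trace (g⁻¹ * h) / 2 := by
  have hGs : g⁻¹ᵀ = g⁻¹ := by rw [transpose_nonsing_inv, hgs]
  have hstress : of (stressEnergy g Ψ) = (1 / 2 * norm2T g Ψ) • g + of (circT g Ψ) := rfl
  have hof : of (fun i j => h i j) = h := rfl
  rw [ip2_eq_trace, hstress, transpose_add, Matrix.mul_add, trace_add, transpose_smul,
    Matrix.mul_smul, trace_smul, ← ip2_eq_trace, ip2_circT, hof, hGs, hgs.eq,
    normForm_eq_trace Ψ h, ← trace_transpose (h * _), transpose_mul, transpose_transpose, hh.eq]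
  simp only [Matrix.mul_assoc, mul_nonsing_inv_cancel_left _ _ hg, nonsing_inv_mul _ hg,
    Matrix.mul_one, smul_eq_mul]
  ring

theorem hasDerivAt_norm2T_add_smul {Ψ : Fin n → Fin n → Fin n → ℝ}
    (hΨ : ∀ i j k, Ψ i j k = Ψ i k j) (g h : Matrix (Fin n) (Fin n) ℝ) (hg : IsUnit g.det) :
    HasDerivAt (fun t : ℝ => norm2T (g + t • h) Ψ)
      (normForm Ψ h g⁻¹ g⁻¹ - 2 * normForm Ψ g (g⁻¹ * h * g⁻¹) g⁻¹) 0 := by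
  have hinv := hasDerivAt_inv_add_smul_apply g h hg
  have hN := hasDerivAt_normForm Ψ (B' := -(g⁻¹ * h * g⁻¹)) (C' := -(g⁻¹ * h * g⁻¹))
    (hasDerivAt_add_smul_apply g h · · 0) hinv hinv
  simp only [zero_smul, add_zero] at hN
  simp only [norm2T_eq_normForm]
  refine hN.congr_deriv ?_
  rw [normForm_comm hΨ g g⁻¹, normForm_neg_mid]
  ring

end Metric

theorem hasDerivAt_norm2T_sqrtDet_general {n : ℕ}
    (g : Matrix (Fin n) (Fin n) ℝ) (hg : g.PosDef)
    (h : Matrix (Fin n) (Fin n) ℝ) (hh : h.IsSymm)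
    (Ψ : Fin n → Fin n → Fin n → ℝ) (hΨ : ∀ i j k, Ψ i j k = Ψ i k j) :
    HasDerivAt (fun t : ℝ => norm2T (g + t • h) Ψ * Real.sqrt (g + t • h).det)
      (ip2 g (stressEnergy g Ψ) (fun i j => h i j) * Real.sqrt g.det) 0 := by
  have hdet : 0 < g.det := hg.det_pos
  have hunit : IsUnit g.det := hdet.ne'.isUnit
  have hsqrt : HasDerivAt (fun t : ℝ => √(g + t • h).det)
      (g.det * trace (g⁻¹ * h) / (2 * √g.det)) 0 := by
    simpa using (hasDerivAt_det_add_smul g h hunit).sqrt (by simpa using hdet.ne')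
  refine ((hasDerivAt_norm2T_add_smul hΨ g h hunit).mul hsqrt).congr_deriv ?_
  rw [ip2_stressEnergy Ψ (isHermitian_iff_isSymm.mp hg.isHermitian) hunit hh]
  have hs : √g.det * √g.det = g.det := Real.mul_self_sqrt hdet.le
  simp only [zero_smul, add_zero]
  field_simp
  linear_combination -(norm2T g Ψ * trace (g⁻¹ * h)) * hs

/-- t ↦ |Ψ|²_{g+th}·√det(g+th) has derivative ⟨T_g(Ψ),h⟩_g·√det g at t = 0. -/
theorem hasDerivAt_norm2T_sqrtDet {n : ℕ} (hn : 2 ≤ n)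
    (g : Matrix (Fin n) (Fin n) ℝ) (hg : g.PosDef)
    (h : Matrix (Fin n) (Fin n) ℝ) (hh : h.IsSymm)
    (Ψ : Fin n → Fin n → Fin n → ℝ) (hΨ : ∀ i j k, Ψ i j k = Ψ i k j)
    (hcon : conT Ψ = fun _ => (0 : ℝ)) :
    HasDerivAt (fun t : ℝ => norm2T (g + t • h) Ψ * Real.sqrt (g + t • h).det)
      (ip2 g (stressEnergy g Ψ) (fun i j => h i j) * Real.sqrt g.det) 0 :=
  hasDerivAt_norm2T_sqrtDet_general g hg h hh Ψ hΨ

end ProjFunctional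
end
end

section
/- Let g be a symmetric positive definite n×n real matrix (n ≥ 2), λ > 0 a real number, Y a vector, and Φ a (1,2)-tensor symmetric in its lower indices with con(Φ) = 0. Set Φ̃ = Φ + (g⊗Y)_0, X = (1/m) tr_g(Φ), and X̃ = (1/m) tr_{λg}(Φ̃), where m = (n+2)(n−1)/(n+1). Then X̃ = λ⁻¹(X + Y), and the trace-modified parts agree: Φ̃ − ((λg)⊗X̃)_0 = Φ − (g⊗X)_0. (This is the pointwise content of the conformal invariance of the tensor A_{[g]}.) -/
open Matrix BigOperators

noncomputable section

namespace ProjFunctional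

/-- conformal invariance of A; X̃ = λ⁻¹(X+Y) and the trace-modified
parts agree. -/
theorem conformal_invariance_A {n : ℕ} (hn : 2 ≤ n) (g : Matrix (Fin n) (Fin n) ℝ)
    (hg : g.PosDef) (lam : ℝ) (hlam : 0 < lam) (Y : Fin n → ℝ)
    (Φ : Fin n → Fin n → Fin n → ℝ)
    (hΦ : ∀ i j k, Φ i j k = Φ i k j) (hcon : conT Φ = fun _ => (0 : ℝ))
    (Φt : Fin n → Fin n → Fin n → ℝ)
    (hΦt : Φt = fun i j k => Φ i j k + tfT (gT g Y) i j k)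
    (X : Fin n → ℝ) (hX : X = fun i => (1 / mconst n) * trg g Φ i)
    (Xt : Fin n → ℝ) (hXt : Xt = fun i => (1 / mconst n) * trg (lam • g) Φt i) :
    Xt = (fun i => lam⁻¹ * (X i + Y i)) ∧
      (fun i j k => Φt i j k - tfT (gT (lam • g) Xt) i j k)
        = (fun i j k => Φ i j k - tfT (gT g X) i j k) := by
  have hnR : (2:ℝ) ≤ (n:ℝ) := by exact_mod_cast hn
  have hn1 : (0:ℝ) < (n:ℝ) + 1 := by linarith
  have hm : mconst n ≠ 0 := by
    have h1 : (0:ℝ) < (n:ℝ) + 2 := by linarith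
    have h2 : (0:ℝ) < (n:ℝ) - 1 := by linarith
    exact ne_of_gt (div_pos (mul_pos h1 h2) hn1)
  have hdet : IsUnit g.det := isUnit_iff_ne_zero.mpr (ne_of_gt hg.det_pos)
  have hinvg : g⁻¹ * g = 1 := Matrix.nonsing_inv_mul g hdet
  have hgg : ∀ i l, ∑ k, g⁻¹ i k * g k l = if i = l then 1 else 0 := by
    intro i l
    have := congrFun (congrFun hinvg i) l
    simpa [Matrix.mul_apply, Matrix.one_apply] using this
  have hsym : ∀ j k, g j k = g k j := by
    intro j k
    have := hg.isHermitian.apply k j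
    simpa using this
  have hisym : ∀ j k, g⁻¹ j k = g⁻¹ k j := by
    intro j k
    have := hg.isHermitian.inv.apply k j
    simpa using this
  -- inverse of rescaled metric
  haveI : Invertible lam := invertibleOfNonzero hlam.ne'
  have hsmulinv : (lam • g)⁻¹ = lam⁻¹ • g⁻¹ := by
    rw [Matrix.inv_smul (A := g) lam hdet, invOf_eq_inv]
  -- key trace computation
  have hA : conT (gT g Y) = fun k => ∑ l, Y l * g k l := by
    funext k; simp [conT, gT]
  have key : ∀ i, trg g (tfT (gT g Y)) i = mconst n * Y i := by
    intro i
    have P1 : ∑ j, ∑ k, g⁻¹ j k * (Y i * g j k) = (n : ℝ) * Y i := by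
      calc ∑ j, ∑ k, g⁻¹ j k * (Y i * g j k)
          = Y i * ∑ j, ∑ k, g⁻¹ j k * g k j := by
            rw [Finset.mul_sum]; refine Finset.sum_congr rfl fun j _ => ?_
            rw [Finset.mul_sum]; refine Finset.sum_congr rfl fun k _ => ?_
            rw [hsym k j]; ring
        _ = Y i * ∑ j : Fin n, (1:ℝ) := by
            rw [Finset.sum_congr rfl fun j _ => hgg j j]; simp
        _ = (n:ℝ) * Y i := by simp [mul_comm]
    have hAY : ∀ i, ∑ k, g⁻¹ i k * ∑ l, Y l * g k l = Y i := by
      intro i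
      calc ∑ k, g⁻¹ i k * ∑ l, Y l * g k l
          = ∑ k, ∑ l, g⁻¹ i k * (Y l * g k l) := by
            exact Finset.sum_congr rfl fun k _ => by rw [Finset.mul_sum]
        _ = ∑ l, ∑ k, g⁻¹ i k * (Y l * g k l) := Finset.sum_comm
        _ = ∑ l, Y l * ∑ k, g⁻¹ i k * g k l := by
            refine Finset.sum_congr rfl fun l _ => ?_
            rw [Finset.mul_sum]
            exact Finset.sum_congr rfl fun k _ => by ring
        _ = ∑ l, Y l * (if i = l then 1 else 0) := by
            exact Finset.sum_congr rfl fun l _ => by rw [hgg i l]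
        _ = Y i := by simp
    have P2 : ∑ j, ∑ k, g⁻¹ j k * (if i = j then (∑ l, Y l * g k l) else 0) = Y i := by
      calc ∑ j, ∑ k, g⁻¹ j k * (if i = j then (∑ l, Y l * g k l) else 0)
          = ∑ j, (if i = j then ∑ k, g⁻¹ j k * ∑ l, Y l * g k l else 0) := by
            refine Finset.sum_congr rfl fun j _ => ?_
            split_ifs <;> simp [Finset.mul_sum]
        _ = Y i := by rw [Finset.sum_ite_eq]; simp [hAY i]
    have P3 : ∑ j, ∑ k, g⁻¹ j k * (if i = k then (∑ l, Y l * g j l) else 0) = Y i := by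
      calc ∑ j, ∑ k, g⁻¹ j k * (if i = k then (∑ l, Y l * g j l) else 0)
          = ∑ k, ∑ j, g⁻¹ k j * (if i = k then (∑ l, Y l * g j l) else 0) := by
            rw [Finset.sum_comm]
            exact Finset.sum_congr rfl fun k _ => Finset.sum_congr rfl fun j _ => by
              rw [hisym j k]
        _ = Y i := by
            calc ∑ k, ∑ j, g⁻¹ k j * (if i = k then (∑ l, Y l * g j l) else 0)
                = ∑ k, (if i = k then ∑ j, g⁻¹ k j * ∑ l, Y l * g j l else 0) := by
                  refine Finset.sum_congr rfl fun k _ => ?_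
                  split_ifs <;> simp [Finset.mul_sum]
              _ = Y i := by rw [Finset.sum_ite_eq]; simp [hAY i]
    have expand : trg g (tfT (gT g Y)) i
        = ∑ j, ∑ k, (g⁻¹ j k * (Y i * g j k)
          - (1 / ((n:ℝ)+1)) * (g⁻¹ j k * (if i = j then (∑ l, Y l * g k l) else 0))
          - (1 / ((n:ℝ)+1)) * (g⁻¹ j k * (if i = k then (∑ l, Y l * g j l) else 0))) := by
      simp only [trg, tfT, symT, hA, gT]
      exact Finset.sum_congr rfl fun j _ => Finset.sum_congr rfl fun k _ => by ring
    rw [expand]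
    simp only [Finset.sum_sub_distrib, ← Finset.mul_sum]
    rw [P1, P2, P3, mconst]
    field_simp
    ring
  -- linearity of trg over g
  have htlin : ∀ i, trg g Φt i = trg g Φ i + mconst n * Y i := by
    intro i
    rw [← key i]
    simp [trg, hΦt, mul_add, Finset.sum_add_distrib]
  -- rescaling of trg
  have hresc : ∀ (Ψ : Fin n → Fin n → Fin n → ℝ) i, trg (lam • g) Ψ i = lam⁻¹ * trg g Ψ i := by
    intro Ψ i
    simp only [trg, hsmulinv, Matrix.smul_apply, smul_eq_mul, Finset.mul_sum, mul_assoc]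
  have part1 : Xt = (fun i => lam⁻¹ * (X i + Y i)) := by
    funext i
    rw [hXt]
    simp only [hresc, htlin, hX]
    field_simp
  refine ⟨part1, ?_⟩
  funext i j k
  have hgTeq : gT (lam • g) Xt = gT g (fun i => X i + Y i) := by
    funext a b c
    simp only [gT, part1, Matrix.smul_apply, smul_eq_mul]
    field_simp
  have hconXY : conT (gT g (fun i => X i + Y i)) = fun k => conT (gT g X) k + conT (gT g Y) k := by
    funext k
    simp [conT, gT, add_mul, Finset.sum_add_distrib]
  rw [hgTeq, hΦt]
  simp only [tfT, symT, hconXY, gT, add_mul]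
  split_ifs <;> ring


end ProjFunctional
end
end

section
/- Let n = 2 and let g be a symmetric positive definite 2×2 real matrix with inverse (g^{ij}). Let A = (A_{ijk}) be a totally symmetric (0,3)-tensor that is totally trace-free with respect to g, i.e. Σ_{j,k} g^{jk} A_{ijk} = 0 for every i, and set α^i_{jk} = Σ_l g^{il} A_{ljk}. Then the stress-energy tensor of α vanishes identically: T_g(α) = (1/2)|α|²_g·g + α⊛_g α = 0. -/
open Matrix BigOperators

noncomputable section

namespace ProjFunctional

/-! Lowering the first index of `α` gives back `A`, and with `M = sliceInner g A`, the Gram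
matrix `M i j = ⟨A_i, A_j⟩_g` of the slices `A_i = A i`, one finds `|α|²_g = ⟨g⁻¹, M⟩` and
`α ⊛_g α = -M`, so `T_g(α) = ½ ⟨g⁻¹, M⟩ g - M` vanishes as soon as `M` is a multiple of `g`.
That is where dimension 2 enters: the endomorphisms `E_k = g⁻¹ A_k` are trace-free, so
Cayley–Hamilton gives `E_k E_l + E_l E_k = tr (E_k E_l) • 1`, hence `Σ g^{kl} E_k E_l` is
scalar, and `g Σ g^{kl} E_k E_l = M`. -/

open Finset

variable {n : ℕ}

theorem _root_.Matrix.mul_add_mul_eq_trace_mul_smul_one {R : Type*} [CommRing R]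
    {X Y : Matrix (Fin 2) (Fin 2) R} (hX : X.trace = 0) (hY : Y.trace = 0) :
    X * Y + Y * X = (X * Y).trace • 1 := by
  rw [trace_fin_two, add_eq_zero_iff_eq_neg'] at hX hY
  ext i j
  fin_cases i <;> fin_cases j <;>
    simp [mul_apply, trace_fin_two, Fin.sum_univ_two, hX, hY] <;> ring

theorem _root_.Matrix.two_smul_sum_smul_mul_eq {R ι : Type*} [CommRing R] [Fintype ι]
    {c : Matrix ι ι R} (hc : c.IsSymm) {E : ι → Matrix (Fin 2) (Fin 2) R}
    (hE : ∀ k, (E k).trace = 0) :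
    (2 : R) • ∑ k, ∑ l, c k l • (E k * E l) = (∑ k, ∑ l, c k l * (E k * E l).trace) • 1 := by
  calc (2 : R) • ∑ k, ∑ l, c k l • (E k * E l)
      = ∑ k, ∑ l, c k l • (E k * E l) + ∑ k, ∑ l, c k l • (E l * E k) := by
        rw [two_smul]
        congr 1
        rw [sum_comm]
        simp only [hc.apply]
    _ = ∑ k, ∑ l, c k l • (E k * E l + E l * E k) := by
        simp only [← sum_add_distrib, smul_add]
    _ = _ := by
        simp only [mul_add_mul_eq_trace_mul_smul_one (hE _) (hE _), smul_smul, sum_smul]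

def IsTotallySymm (A : Fin n → Fin n → Fin n → ℝ) : Prop :=
  ∀ i j k, A i j k = A j i k ∧ A i j k = A i k j

theorem IsTotallySymm.swap12 {A : Fin n → Fin n → Fin n → ℝ} (hA : IsTotallySymm A)
    (i j k : Fin n) : A i j k = A j i k := (hA i j k).1

theorem IsTotallySymm.swap23 {A : Fin n → Fin n → Fin n → ℝ} (hA : IsTotallySymm A)
    (i j k : Fin n) : A i j k = A i k j := (hA i j k).2

def raiseT (g : Matrix (Fin n) (Fin n) ℝ) (A : Fin n → Fin n → Fin n → ℝ) :
    Fin n → Fin n → Fin n → ℝ :=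
  fun i j k => ∑ l, g⁻¹ i l * A l j k

def lowerT (g : Matrix (Fin n) (Fin n) ℝ) (Ψ : Fin n → Fin n → Fin n → ℝ) :
    Fin n → Fin n → Fin n → ℝ :=
  fun i j k => ∑ a, g i a * Ψ a j k

def sliceInner (g : Matrix (Fin n) (Fin n) ℝ) (A : Fin n → Fin n → Fin n → ℝ) (i j : Fin n) : ℝ :=
  ∑ u, ∑ v, ∑ b, ∑ c, g⁻¹ u b * g⁻¹ v c * A i u v * A j b c

theorem lowerT_raiseT {g : Matrix (Fin n) (Fin n) ℝ} (hg : IsUnit g.det)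
    (A : Fin n → Fin n → Fin n → ℝ) : lowerT g (raiseT g A) = A := by
  funext i j k
  have h := congrFun (congrFun (g.mul_nonsing_inv hg) i)
  simp only [lowerT, raiseT, mul_sum, ← mul_assoc]
  rw [sum_comm]
  simp only [← sum_mul, ← mul_apply, h, one_apply, ite_mul, one_mul, zero_mul, sum_ite_eq,
    mem_univ, if_true]

theorem ipT_eq_sum_lowerT (g : Matrix (Fin n) (Fin n) ℝ) (Φ Ψ : Fin n → Fin n → Fin n → ℝ) :
    ipT g Φ Ψ = ∑ i, ∑ j, ∑ k, ∑ b, ∑ c, Φ i j k * g⁻¹ j b * g⁻¹ k c * lowerT g Ψ i b c := by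
  unfold ipT lowerT
  refine sum_congr rfl fun i _ => sum_congr rfl fun j _ => sum_congr rfl fun k _ => ?_
  rw [sum_comm]
  refine sum_congr rfl fun b _ => ?_
  rw [sum_comm]
  simp only [mul_sum, mul_assoc]

theorem circT_eq_sum_lowerT (g : Matrix (Fin n) (Fin n) ℝ) (Ψ : Fin n → Fin n → Fin n → ℝ)
    (i j : Fin n) :
    circT g Ψ i j = ∑ u, ∑ v, ∑ b, ∑ c, lowerT g Ψ j u v * lowerT g Ψ i b c * g⁻¹ u b * g⁻¹ v c
      - 2 * ∑ c, ∑ a, ∑ b, lowerT g Ψ a j c * Ψ a i b * g⁻¹ b c := by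
  unfold circT lowerT
  congr 1
  · conv_lhs =>
      rw [sum_comm]; enter [2, u]; rw [sum_comm]; enter [2, v]
      conv => enter [2, k]; rw [sum_comm]; enter [2, b]; rw [sum_comm]
      rw [sum_comm]; enter [2, b]; rw [sum_comm]; enter [2, c]; rw [sum_comm]
    simp only [sum_mul, mul_sum]
    iterate 6 refine sum_congr rfl fun _ _ => ?_
    ring
  · congr 1
    conv_lhs =>
      rw [sum_comm]; enter [2, c]; rw [sum_comm]; enter [2, a]; rw [sum_comm]
    simp only [sum_mul]
    iterate 4 refine sum_congr rfl fun _ _ => ?_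
    ring

theorem norm2T_raiseT {g : Matrix (Fin n) (Fin n) ℝ} (hg : IsUnit g.det)
    (A : Fin n → Fin n → Fin n → ℝ) :
    norm2T g (raiseT g A) = ∑ i, ∑ l, g⁻¹ i l * sliceInner g A l i := by
  rw [norm2T, ipT_eq_sum_lowerT, lowerT_raiseT hg]
  unfold raiseT sliceInner
  refine sum_congr rfl fun i _ => ?_
  simp only [sum_mul, mul_sum]
  conv_rhs =>
    rw [sum_comm]; enter [2, u]; rw [sum_comm]; enter [2, v]; rw [sum_comm]; enter [2, b]
    rw [sum_comm]
  iterate 5 refine sum_congr rfl fun _ _ => ?_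
  ring

theorem circT_raiseT {g : Matrix (Fin n) (Fin n) ℝ} (hg : IsUnit g.det) (hG : g⁻¹.IsSymm)
    {A : Fin n → Fin n → Fin n → ℝ} (hA : IsTotallySymm A) (i j : Fin n) :
    circT g (raiseT g A) i j = - sliceInner g A j i := by
  have hfirst : ∑ u, ∑ v, ∑ b, ∑ c, A j u v * A i b c * g⁻¹ u b * g⁻¹ v c = sliceInner g A j i := by
    unfold sliceInner
    iterate 4 refine sum_congr rfl fun _ _ => ?_
    ring
  have hsecond : ∑ c, ∑ a, ∑ b, A a j c * raiseT g A a i b * g⁻¹ b c = sliceInner g A j i := by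
    unfold raiseT sliceInner
    simp only [mul_sum, sum_mul]
    conv_lhs => rw [sum_comm]; enter [2, a, 2, c]; rw [sum_comm]
    refine sum_congr rfl fun a _ => sum_congr rfl fun c _ => sum_congr rfl fun l _ =>
      sum_congr rfl fun b _ => ?_
    rw [hA.swap12 a j c, hA.swap12 l i b, hG.apply b c]
    ring
  rw [circT_eq_sum_lowerT, lowerT_raiseT hg, hfirst, hsecond]
  ring

theorem trace_inv_mul_of_eq_sum {g : Matrix (Fin n) (Fin n) ℝ}
    {A : Fin n → Fin n → Fin n → ℝ} (hA : IsTotallySymm A) (k : Fin n) :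
    (g⁻¹ * Matrix.of (A k)).trace = ∑ j, ∑ l, g⁻¹ j l * A k j l := by
  simp only [Matrix.trace, Matrix.diag, Matrix.mul_apply, Matrix.of_apply, hA.swap23 k]

theorem sliceInner_eq_mul_sum_smul_mul {g : Matrix (Fin n) (Fin n) ℝ} (hg : IsUnit g.det)
    {A : Fin n → Fin n → Fin n → ℝ} (hA : IsTotallySymm A) (i j : Fin n) :
    sliceInner g A i j = (g * ∑ k, ∑ l, g⁻¹ k l •
      ((g⁻¹ * Matrix.of (A k)) * (g⁻¹ * Matrix.of (A l)))) i j := by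
  have hgG : g * g⁻¹ = 1 := g.mul_nonsing_inv hg
  have hlower : ∀ k l, g * ((g⁻¹ * Matrix.of (A k)) * (g⁻¹ * Matrix.of (A l))) =
      Matrix.of (A k) * g⁻¹ * Matrix.of (A l) := by
    simp only [← Matrix.mul_assoc, hgG, Matrix.one_mul, implies_true]
  simp only [Finset.mul_sum, Matrix.mul_smul, hlower]
  simp only [Matrix.sum_apply, Matrix.smul_apply, Matrix.mul_apply, Matrix.of_apply, smul_eq_mul,
    mul_sum, sum_mul, sliceInner]
  conv_lhs => enter [2, u]; rw [sum_comm]; enter [2, b]; rw [sum_comm]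
  refine sum_congr rfl fun k _ => sum_congr rfl fun l _ => sum_congr rfl fun y _ =>
    sum_congr rfl fun x _ => ?_
  rw [hA.swap12 i k x, hA.swap12 j l y, hA.swap23 l j y]
  ring

theorem sliceInner_eq_smul {g : Matrix (Fin 2) (Fin 2) ℝ} (hg : IsUnit g.det) (hG : g⁻¹.IsSymm)
    {A : Fin 2 → Fin 2 → Fin 2 → ℝ} (hA : IsTotallySymm A)
    (htf : ∀ i, ∑ j, ∑ k, g⁻¹ j k * A i j k = 0) :
    ∃ s : ℝ, ∀ i j, sliceInner g A i j = s * g i j := by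
  set E : Fin 2 → Matrix (Fin 2) (Fin 2) ℝ := fun k => g⁻¹ * Matrix.of (A k)
  have hE : ∀ k, (E k).trace = 0 := fun k => (trace_inv_mul_of_eq_sum hA k).trans (htf k)
  obtain ⟨t, ht⟩ : ∃ t : ℝ, (2 : ℝ) • ∑ k, ∑ l, g⁻¹ k l • (E k * E l) = t • 1 :=
    ⟨_, Matrix.two_smul_sum_smul_mul_eq hG hE⟩
  have hscalar : ∑ k, ∑ l, g⁻¹ k l • (E k * E l) = (t / 2) • (1 : Matrix (Fin 2) (Fin 2) ℝ) := by
    rw [div_eq_inv_mul, mul_smul, ← ht, smul_smul, inv_mul_cancel₀ two_ne_zero, one_smul]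
  refine ⟨t / 2, fun i j => ?_⟩
  rw [sliceInner_eq_mul_sum_smul_mul hg hA, hscalar, Matrix.mul_smul, Matrix.mul_one,
    Matrix.smul_apply, smul_eq_mul]

/-- in dimension 2, the stress-energy tensor of the tensor obtained
from a totally symmetric, totally trace-free (0,3)-tensor vanishes identically. -/
theorem stressEnergy_cubic_vanishes (g : Matrix (Fin 2) (Fin 2) ℝ) (hg : g.PosDef)
    (A : Fin 2 → Fin 2 → Fin 2 → ℝ)
    (hsym : ∀ i j k, A i j k = A j i k ∧ A i j k = A i k j)
    (htf : ∀ i, ∑ j, ∑ k, g⁻¹ j k * A i j k = 0)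
    (α : Fin 2 → Fin 2 → Fin 2 → ℝ)
    (hα : α = fun i j k => ∑ l, g⁻¹ i l * A l j k) :
    ∀ i j, stressEnergy g α i j = 0 := by
  have hgsymm : g.IsSymm := Matrix.isHermitian_iff_isSymm.mp hg.isHermitian
  have hdet : IsUnit g.det := (g.isUnit_iff_isUnit_det).mp hg.isUnit
  obtain ⟨s, hs⟩ := sliceInner_eq_smul hdet hgsymm.inv hsym htf
  have htrace : ∑ i, ∑ l, g⁻¹ i l * g l i = 2 := by
    simpa [Matrix.trace, Matrix.mul_apply] using congrArg Matrix.trace (g.nonsing_inv_mul hdet)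
  intro i j
  subst hα
  change 1 / 2 * norm2T g (raiseT g A) * g i j + circT g (raiseT g A) i j = 0
  rw [norm2T_raiseT hdet, circT_raiseT hdet hgsymm.inv hsym]
  simp only [hs, mul_left_comm _ s, ← mul_sum]
  rw [htrace, hgsymm.apply]
  ring

end ProjFunctional
end
end
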